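/- arXiv:math/0305264 — 4 statements merged into one kernel-verified Lean document; each statement's English description precedes it below -/
import Mathlib

section
/- There is a constant C(ρ) ≥ 1 depending only on ρ > 1 such that for all t ∈ (0,2] and all natural numbers m with 1 ≤ m ≤ t^(-1/(ρ-1)) + 1, one has t^m · (m!)^(ρ-1) ≤ C(ρ) · m^((ρ-1)/2) · e^(-(ρ-1)m). -/
open Real Nat

/-!
Put `ε = ρ - 1` and `s = t ^ (1 / ε)`, so that `t ^ m * (m !) ^ ε = (s ^ m * m !) ^ ε` and the
constraint on `m` reads `(m - 1) s ≤ 1`. For `m ≥ 2` this gives `s ^ m ≤ (m - 1) ^ (-m)`, and the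
upper Stirling bound `m ! ≤ e √m (m / e) ^ m` (the Stirling sequence decreases from `e / √2`)
together with `(m / (m - 1)) ^ m ≤ e²` yields `s ^ m * m ! ≤ e³ √m e^(-m)`. The case `m = 1` only
uses `t ≤ 2`.
-/

theorem factorial_succ_le_stirling (n : ℕ) :
    ((n + 1)! : ℝ) ≤ exp 1 * √(n + 1) * ((n + 1) / exp 1) ^ (n + 1) := by
  have h : Stirling.stirlingSeq (n + 1) ≤ Stirling.stirlingSeq 1 :=
    Stirling.stirlingSeq'_antitone (Nat.zero_le n)
  rw [Stirling.stirlingSeq_one, Stirling.stirlingSeq,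
    div_le_div_iff₀ (by positivity) (by positivity), sqrt_mul zero_le_two] at h
  push_cast at h
  have h2 : (0 : ℝ) < √2 := by positivity
  nlinarith

theorem one_add_inv_pow_succ_le_exp_two (n : ℕ) : (1 + (n : ℝ)⁻¹) ^ (n + 1) ≤ exp 2 := by
  have hn : (n : ℝ)⁻¹ ≤ 1 := by
    rcases n.eq_zero_or_pos with rfl | hn
    · simp
    · exact inv_le_one_of_one_le₀ (by exact_mod_cast hn)
  calc (1 + (n : ℝ)⁻¹) ^ (n + 1) = (1 + (n : ℝ)⁻¹) ^ n * (1 + (n : ℝ)⁻¹) := pow_succ _ _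
    _ ≤ exp 1 * exp 1 := by
        gcongr
        · exact one_add_inv_pow_le_exp
        · linarith [add_one_le_exp (n : ℝ)⁻¹, exp_le_exp.2 hn]
    _ = exp 2 := by rw [← exp_add]; norm_num

theorem pow_succ_mul_factorial_succ_le {n : ℕ} (hn : n ≠ 0) {s : ℝ} (hs : 0 ≤ s)
    (hns : n * s ≤ 1) :
    s ^ (n + 1) * ((n + 1)! : ℝ) ≤ exp 3 * √(n + 1) * exp (-(n + 1)) := by
  have hn' : (0 : ℝ) < n := by positivity
  have hsn : s ≤ (n : ℝ)⁻¹ := by rw [← one_div, le_div_iff₀ hn']; linarith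
  calc s ^ (n + 1) * ((n + 1)! : ℝ)
      ≤ (n : ℝ)⁻¹ ^ (n + 1) * (exp 1 * √(n + 1) * ((n + 1) / exp 1) ^ (n + 1)) := by
        gcongr
        exact factorial_succ_le_stirling n
    _ = exp 1 * √(n + 1) * (1 + (n : ℝ)⁻¹) ^ (n + 1) * exp (-(n + 1)) := by
        have he : exp ((n : ℝ) + 1) = exp 1 ^ (n + 1) := by rw [exp_one_pow]; push_cast; rfl
        have hinv : 1 + (n : ℝ)⁻¹ = (n + 1) / n := by field_simp
        rw [exp_neg, he, hinv, div_pow, div_pow, inv_pow]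
        ring
    _ ≤ exp 1 * √(n + 1) * exp 2 * exp (-(n + 1)) := by
        gcongr
        exact one_add_inv_pow_succ_le_exp_two n
    _ = exp 3 * √(n + 1) * exp (-(n + 1)) := by
        rw [mul_right_comm _ _ (exp 2), ← exp_add]; norm_num

theorem pow_succ_mul_factorial_succ_rpow_le {ε : ℝ} (hε : 0 < ε) {t : ℝ} (ht : 0 < t) {n : ℕ}
    (hn : n ≠ 0) (hnt : (n : ℝ) ≤ t ^ (-ε⁻¹)) :
    t ^ (n + 1) * ((n + 1)! : ℝ) ^ ε ≤
      exp (3 * ε) * ((n : ℝ) + 1) ^ (ε / 2) * exp (-ε * (n + 1)) := by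
  set s := t ^ ε⁻¹
  have hs : 0 < s := by positivity
  have hns : n * s ≤ 1 := by
    rw [rpow_neg ht.le] at hnt
    rwa [← le_div_iff₀ hs, one_div]
  calc t ^ (n + 1) * ((n + 1)! : ℝ) ^ ε = (s ^ (n + 1) * ((n + 1)! : ℝ)) ^ ε := by
        rw [← rpow_inv_rpow ht.le hε.ne', rpow_pow_comm hs.le,
          mul_rpow (by positivity) (by positivity)]
    _ ≤ (exp 3 * √(n + 1) * exp (-(n + 1))) ^ ε :=
        rpow_le_rpow (by positivity) (pow_succ_mul_factorial_succ_le hn hs.le hns) hε.le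
    _ = exp (3 * ε) * ((n : ℝ) + 1) ^ (ε / 2) * exp (-ε * (n + 1)) := by
        rw [mul_rpow (by positivity) (by positivity), mul_rpow (by positivity) (by positivity),
          ← exp_mul, ← exp_mul, sqrt_eq_rpow, ← rpow_mul (by positivity)]
        ring_nf

theorem stmt0 (ρ : ℝ) (hρ : 1 < ρ) :
    ∃ C : ℝ, 1 ≤ C ∧ ∀ (t : ℝ) (m : ℕ), 0 < t → t ≤ 2 → 1 ≤ m →
      (m : ℝ) ≤ t ^ (-(1 / (ρ - 1))) + 1 →
      t ^ m * (m ! : ℝ) ^ (ρ - 1) ≤ C * (m : ℝ) ^ ((ρ - 1) / 2) * Real.exp (-(ρ - 1) * m) := by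
  set ε := ρ - 1
  have hε : 0 < ε := sub_pos.2 hρ
  refine ⟨2 * exp (3 * ε), by linarith [one_le_exp (by positivity : 0 ≤ 3 * ε)], ?_⟩
  intro t m ht ht2 hm hmt
  obtain ⟨n, rfl⟩ : ∃ n, m = n + 1 := ⟨m - 1, by omega⟩
  rcases eq_or_ne n 0 with rfl | hn
  · have h : 1 ≤ exp (3 * ε) * exp (-ε) := by rw [← exp_add]; exact one_le_exp (by linarith)
    simp only [zero_add, pow_one, factorial_one, cast_one, one_rpow, mul_one]
    nlinarith
  rw [one_div] at hmt
  push_cast at hmt ⊢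
  calc t ^ (n + 1) * ((n + 1)! : ℝ) ^ ε
      ≤ exp (3 * ε) * ((n : ℝ) + 1) ^ (ε / 2) * exp (-ε * (n + 1)) :=
        pow_succ_mul_factorial_succ_rpow_le hε ht hn (by linarith)
    _ ≤ 2 * exp (3 * ε) * ((n : ℝ) + 1) ^ (ε / 2) * exp (-ε * (n + 1)) := by
        gcongr
        exact le_mul_of_one_le_left (exp_pos _).le one_le_two
end

section
/- For any real ρ > 1 there is a constant C > 0 such that for all t ∈ (0,2] and all natural numbers m with t^(-1/(ρ-1)) ≤ m ≤ t^(-1/(ρ-1)) + 1, one has t^m · (m!)^(ρ-1) · (m+1)^ρ ≤ C · t^(-ρ/(ρ-1) - 1/2) · exp(-(ρ-1) · t^(-1/(ρ-1))). -/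
open Real Nat

lemma fact_le_stirling (m : ℕ) (hm : 1 ≤ m) :
    (m ! : ℝ) ≤ Real.exp 1 * Real.sqrt m * ((m : ℝ) / Real.exp 1) ^ m := by
  obtain ⟨k, rfl⟩ := Nat.exists_eq_add_of_le hm
  have h1 : Stirling.stirlingSeq (1 + k) ≤ Stirling.stirlingSeq 1 := by
    have := Stirling.stirlingSeq'_antitone (Nat.zero_le k)
    simpa [Function.comp, Nat.succ_eq_add_one, Nat.add_comm] using this
  rw [Stirling.stirlingSeq_one] at h1
  have hden : (0:ℝ) < Real.sqrt (2 * (1 + k : ℕ) : ℝ) * (((1 + k : ℕ) : ℝ) / Real.exp 1) ^ (1 + k) := by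
    positivity
  have h2 : ((1 + k)! : ℝ) ≤ (Real.exp 1 / Real.sqrt 2) *
      (Real.sqrt (2 * (1 + k : ℕ) : ℝ) * (((1 + k : ℕ) : ℝ) / Real.exp 1) ^ (1 + k)) := by
    have := (div_le_iff₀ hden).mp h1
    simpa [Stirling.stirlingSeq] using this
  calc ((1 + k)! : ℝ) ≤ _ := h2
    _ = Real.exp 1 * Real.sqrt (1 + k : ℕ) * (((1 + k : ℕ) : ℝ) / Real.exp 1) ^ (1 + k) := by
        rw [show (2 * (1 + k : ℕ) : ℝ) = 2 * ((1 + k : ℕ) : ℝ) by push_cast; ring,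
          Real.sqrt_mul (by norm_num)]
        field_simp

theorem stmt1 (ρ : ℝ) (hρ : 1 < ρ) :
    ∃ C : ℝ, 0 < C ∧ ∀ (t : ℝ) (m : ℕ), 0 < t → t ≤ 2 →
      t ^ (-(1 / (ρ - 1))) ≤ (m : ℝ) → (m : ℝ) ≤ t ^ (-(1 / (ρ - 1))) + 1 →
      t ^ m * (m ! : ℝ) ^ (ρ - 1) * ((m : ℝ) + 1) ^ ρ ≤
        C * t ^ (-(ρ / (ρ - 1)) - 1 / 2) * Real.exp (-(ρ - 1) * t ^ (-(1 / (ρ - 1)))) := by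
  have hρ1 : (0:ℝ) < ρ - 1 := by linarith
  set ε : ℝ := 1 / (ρ - 1) with hεdef
  have hε0 : 0 < ε := by positivity
  set s₀ : ℝ := 2 ^ (-ε) with hs₀def
  have hs₀ : 0 < s₀ := Real.rpow_pos_of_pos two_pos _
  refine ⟨Real.exp (ρ-1) * Real.exp ((ρ-1)*(1+1/s₀)) * (1+1/s₀) ^ ((ρ-1)/2) * (1+2/s₀) ^ ρ,
    by positivity, ?_⟩
  intro t m ht ht2 hm1 hm2
  set s : ℝ := t ^ (-ε) with hsdef
  have hs0 : 0 < s := Real.rpow_pos_of_pos ht _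
  have hss₀ : s₀ ≤ s := Real.rpow_le_rpow_of_nonpos ht ht2 (by linarith)
  have hm0 : (0:ℝ) < m := hs0.trans_le hm1
  have hm1nat : 1 ≤ m := Nat.pos_of_ne_zero (by rintro rfl; simp at hm0)
  have hεmul : ε * (ρ - 1) = 1 := by rw [hεdef]; field_simp
  have ht_eq : t = s ^ (-(ρ-1)) := by
    rw [hsdef, ← Real.rpow_mul ht.le]
    rw [show -ε * -(ρ-1) = ε * (ρ-1) by ring, hεmul, Real.rpow_one]
  have ht_inv : t = ((s : ℝ) ^ (ρ-1))⁻¹ := by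
    rw [ht_eq, Real.rpow_neg hs0.le]
  -- factorial bound, exponentiated
  have hfac : (m ! : ℝ) ^ (ρ-1) ≤
      Real.exp (ρ-1) * (m:ℝ) ^ ((ρ-1)/2) * (((m:ℝ) / Real.exp 1) ^ (ρ-1)) ^ m := by
    have h1 : (m ! : ℝ) ^ (ρ-1) ≤
        (Real.exp 1 * Real.sqrt m * ((m:ℝ) / Real.exp 1) ^ m) ^ (ρ-1) :=
      Real.rpow_le_rpow (by positivity) (fact_le_stirling m hm1nat) hρ1.le
    have h2 : (Real.exp 1 * Real.sqrt m * ((m:ℝ) / Real.exp 1) ^ m) ^ (ρ-1) =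
        Real.exp (ρ-1) * (m:ℝ) ^ ((ρ-1)/2) * (((m:ℝ) / Real.exp 1) ^ (ρ-1)) ^ m := by
      rw [Real.mul_rpow (by positivity) (by positivity),
        Real.mul_rpow (by positivity) (by positivity), Real.exp_one_rpow]
      congr 1
      · congr 1
        rw [Real.sqrt_eq_rpow, ← Real.rpow_mul (Nat.cast_nonneg m),
          show 1/2*(ρ-1) = (ρ-1)/2 from by ring]
      · rw [← Real.rpow_natCast ((m:ℝ) / Real.exp 1) m, ← Real.rpow_mul (by positivity),
          mul_comm, Real.rpow_mul (by positivity), Real.rpow_natCast]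
    exact h2 ▸ h1
  -- bound on A := t * (m/e)^(ρ-1)
  have hA : t * ((m:ℝ) / Real.exp 1) ^ (ρ-1) ≤ Real.exp ((ρ-1) * (1/s - 1)) := by
    have e1 : ((m:ℝ) / Real.exp 1) ^ (ρ-1) = (m:ℝ) ^ (ρ-1) / Real.exp (ρ-1) := by
      rw [Real.div_rpow (Nat.cast_nonneg m) (Real.exp_pos 1).le, Real.exp_one_rpow]
    have e2 : t * (m:ℝ) ^ (ρ-1) = ((m:ℝ) / s) ^ (ρ-1) := by
      rw [Real.div_rpow (Nat.cast_nonneg m) hs0.le, ht_inv]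
      ring
    have e3 : ((m:ℝ) / s) ^ (ρ-1) ≤ Real.exp ((ρ-1) / s) := by
      have h4 : (m:ℝ) / s ≤ Real.exp (1/s) := by
        have a1 : (m:ℝ)/s ≤ (s+1)/s := by gcongr
        have a2 : (s+1)/s = 1 + 1/s := by field_simp
        have a3 : 1 + 1/s ≤ Real.exp (1/s) := by
          have := Real.add_one_le_exp (1/s); linarith
        linarith
      calc ((m:ℝ)/s) ^ (ρ-1) ≤ (Real.exp (1/s)) ^ (ρ-1) :=
            Real.rpow_le_rpow (by positivity) h4 hρ1.le
        _ = Real.exp ((ρ-1)/s) := by rw [← Real.exp_mul]; ring_nf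
    calc t * ((m:ℝ) / Real.exp 1) ^ (ρ-1) = ((m:ℝ)/s) ^ (ρ-1) / Real.exp (ρ-1) := by
          rw [e1, ← e2]; ring
      _ ≤ Real.exp ((ρ-1)/s) / Real.exp (ρ-1) := by gcongr
      _ = Real.exp ((ρ-1) * (1/s - 1)) := by
          rw [← Real.exp_sub]; congr 1; ring
  -- A^m bound
  have hApow : (t * ((m:ℝ) / Real.exp 1) ^ (ρ-1)) ^ m ≤
      Real.exp ((ρ-1)*(1+1/s₀)) * Real.exp (-(ρ-1)*s) := by
    calc (t * ((m:ℝ) / Real.exp 1) ^ (ρ-1)) ^ m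
        ≤ (Real.exp ((ρ-1) * (1/s - 1))) ^ m := pow_le_pow_left₀ (by positivity) hA m
      _ = Real.exp ((ρ-1) * (1/s - 1) * m) := by
          rw [← Real.rpow_natCast (Real.exp _) m, ← Real.exp_mul]
      _ ≤ Real.exp ((ρ-1)*(1+1/s₀)) * Real.exp (-(ρ-1)*s) := by
          rw [← Real.exp_add]
          apply Real.exp_le_exp.mpr
          have key : (ρ-1) * (1/s - 1) * (m:ℝ) = (ρ-1)*((m:ℝ)/s) - (ρ-1)*(m:ℝ) := by ring
          have hms : (m:ℝ)/s ≤ 1 + 1/s₀ := by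
            have a1 : (m:ℝ)/s ≤ (s+1)/s := by gcongr
            have a2 : (s+1)/s = 1 + 1/s := by field_simp
            have a3 : 1/s ≤ 1/s₀ := by gcongr
            linarith
          have p1 : (ρ-1)*((m:ℝ)/s) ≤ (ρ-1)*(1+1/s₀) :=
            mul_le_mul_of_nonneg_left hms hρ1.le
          have p2 : (ρ-1)*s ≤ (ρ-1)*(m:ℝ) := mul_le_mul_of_nonneg_left hm1 hρ1.le
          linarith [key ▸ le_refl ((ρ-1) * (1/s - 1) * (m:ℝ))]
  -- polynomial bounds
  have hsdiv : (1:ℝ) ≤ s/s₀ := (one_le_div hs₀).mpr hss₀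
  have hC : (m:ℝ) ^ ((ρ-1)/2) ≤ (1+1/s₀) ^ ((ρ-1)/2) * s ^ ((ρ-1)/2) := by
    rw [← Real.mul_rpow (by positivity) hs0.le]
    apply Real.rpow_le_rpow (Nat.cast_nonneg m) ?_ (by positivity)
    have : (1+1/s₀)*s = s + s/s₀ := by field_simp
    linarith
  have hD : ((m:ℝ)+1) ^ ρ ≤ (1+2/s₀) ^ ρ * s ^ ρ := by
    rw [← Real.mul_rpow (by positivity) hs0.le]
    apply Real.rpow_le_rpow (by positivity) ?_ (by positivity)
    have : (1+2/s₀)*s = s + 2*(s/s₀) := by field_simp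
    linarith
  have hE : s ^ ((ρ-1)/2) * s ^ ρ = t ^ (-(ρ/(ρ-1)) - 1/2) := by
    rw [← Real.rpow_add hs0, hsdef, ← Real.rpow_mul ht.le]
    congr 1
    rw [hεdef]
    have h : ρ - 1 ≠ 0 := hρ1.ne'
    field_simp
    ring
  calc t ^ m * (m ! : ℝ) ^ (ρ-1) * ((m:ℝ)+1) ^ ρ
      ≤ t ^ m * (Real.exp (ρ-1) * (m:ℝ) ^ ((ρ-1)/2) * (((m:ℝ) / Real.exp 1) ^ (ρ-1)) ^ m)
          * ((m:ℝ)+1) ^ ρ := by gcongr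
    _ = Real.exp (ρ-1) * (t * ((m:ℝ) / Real.exp 1) ^ (ρ-1)) ^ m
          * ((m:ℝ) ^ ((ρ-1)/2) * ((m:ℝ)+1) ^ ρ) := by rw [mul_pow]; ring
    _ ≤ Real.exp (ρ-1) * (Real.exp ((ρ-1)*(1+1/s₀)) * Real.exp (-(ρ-1)*s))
          * (((1+1/s₀) ^ ((ρ-1)/2) * s ^ ((ρ-1)/2)) * ((1+2/s₀) ^ ρ * s ^ ρ)) := by
        gcongr <;> positivity
    _ = (Real.exp (ρ-1) * Real.exp ((ρ-1)*(1+1/s₀)) * (1+1/s₀) ^ ((ρ-1)/2) * (1+2/s₀) ^ ρ)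
          * (s ^ ((ρ-1)/2) * s ^ ρ) * Real.exp (-(ρ-1)*s) := by ring
    _ = _ := by rw [hE]
end

section
/- Let p ≥ 1 and let α^1, …, α^p be multi-indices in ℕ^n each with |α^j| ≥ 1, summing to α. Then (|α^1| - 1)! ⋯ (|α^p| - 1)! · p! ≤ |α|!. -/
open Nat Finset

lemma aux14 : ∀ (p : ℕ) (k : Fin p → ℕ), (∀ j, 1 ≤ k j) →
    (∏ j, (k j - 1)!) * p ! ≤ (∑ j, k j)! := by
  intro p
  induction p with
  | zero => simp
  | succ p ih =>
    intro k hk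
    rw [Fin.prod_univ_castSucc, Fin.sum_univ_castSucc]
    set S := ∑ j : Fin p, k (Fin.castSucc j) with hS
    have hSp : p ≤ S := by
      calc p = ∑ _j : Fin p, 1 := by simp
        _ ≤ S := Finset.sum_le_sum fun j _ => hk _
    have h1 : (∏ j : Fin p, (k (Fin.castSucc j) - 1)!) * p ! ≤ S ! :=
      ih _ fun j => hk _
    have hlast := hk (Fin.last p)
    calc (∏ j : Fin p, (k (Fin.castSucc j) - 1)!) * (k (Fin.last p) - 1)! * (p + 1)!
        = ((∏ j : Fin p, (k (Fin.castSucc j) - 1)!) * p !) * ((k (Fin.last p) - 1)! * (p + 1)) := by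
          rw [Nat.factorial_succ]; ring
      _ ≤ S ! * ((k (Fin.last p) - 1)! * (S + 1)) := by
          apply Nat.mul_le_mul h1
          exact Nat.mul_le_mul_left _ (by omega)
      _ = (S + 1)! * (k (Fin.last p) - 1)! := by rw [Nat.factorial_succ]; ring
      _ ≤ ((S + 1) + (k (Fin.last p) - 1))! :=
          Nat.le_of_dvd (Nat.factorial_pos _) (Nat.factorial_mul_factorial_dvd_factorial_add _ _)
      _ = (S + k (Fin.last p))! := by congr 1; omega

theorem stmt14 (n p : ℕ) (hp : 1 ≤ p) (t : Fin p → (Fin n → ℕ)) (α : Fin n → ℕ)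
    (hone : ∀ j, 1 ≤ ∑ i, t j i) (hsum : ∀ i, (∑ j, t j i) = α i) :
    (∏ j, ((∑ i, t j i) - 1)!) * p ! ≤ (∑ i, α i)! := by
  have : (∑ i, α i) = ∑ j, ∑ i, t j i := by
    simp_rw [← hsum]; rw [Finset.sum_comm]
  rw [this]
  exact aux14 p (fun j => ∑ i, t j i) hone
end

section
/- Let f : O → ℂ^n be holomorphic on an open set O ⊂ ℂ^n containing the closed ball B(ω₀, h), with |f(u) - u| ≤ υh on B(ω₀, h) where 0 < υ < 1/6. Then f is injective on B(ω₀, (1 - 4υ)h). -/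
/-!
Cauchy's estimate, applied on the balls of radius `4υh` centred in `B(ω₀, (1 - 4υ)h)`, bounds the
derivative of `f - id` there by `υh / (4υh) = 1/4`. By the mean value theorem on this convex ball,
`‖(f u - f v) - (u - v)‖ ≤ ‖u - v‖ / 4`, so `f u = f v` forces `u = v`.
-/

open Metric Set

theorem norm_fderiv_le_of_forall_mem_closedBall_norm_le {E F : Type*} [NormedAddCommGroup E]
    [NormedSpace ℂ E] [NormedAddCommGroup F] [NormedSpace ℂ F] {g : E → F} {p : E} {r M : ℝ}
    (hr : 0 < r) (hg : DifferentiableOn ℂ g (closedBall p r))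
    (hM : ∀ x ∈ closedBall p r, ‖g x‖ ≤ M) : ‖fderiv ℂ g p‖ ≤ M / r := by
  have hM0 : 0 ≤ M := (norm_nonneg _).trans (hM p (mem_closedBall_self hr.le))
  refine ContinuousLinearMap.opNorm_le_bound' _ (div_nonneg hM0 hr.le) fun w hw => ?_
  have hw0 : 0 < ‖w‖ := (norm_nonneg w).lt_of_ne' hw
  -- Cauchy's estimate for the restriction of `g` to the complex line through `p` in direction `w`
  set line : ℂ → E := fun z => p + z • w
  have hline : HasDerivAt line w 0 := by
    simpa only [one_smul] using ((hasDerivAt_id' (0 : ℂ)).smul_const w).const_add p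
  have hmaps : MapsTo line (closedBall 0 (r / ‖w‖)) (closedBall p r) := by
    intro z hz
    rw [mem_closedBall_zero_iff, le_div_iff₀ hw0] at hz
    simpa [line, norm_smul] using hz
  have hderiv : deriv (g ∘ line) 0 = fderiv ℂ g p w := by
    have hgp : HasFDerivAt g (fderiv ℂ g p) (line 0) := by
      simpa [line] using (hg.differentiableAt (closedBall_mem_nhds p hr)).hasFDerivAt
    exact (hgp.comp_hasDerivAt 0 hline).deriv
  have hdiff : DiffContOnCl ℂ (g ∘ line) (ball 0 (r / ‖w‖)) :=
    (hg.comp ((differentiable_id.smul_const w).const_add p).differentiableOn hmaps).diffContOnCl_ball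
      subset_rfl
  have hcauchy : ‖deriv (g ∘ line) 0‖ ≤ M / (r / ‖w‖) :=
    Complex.norm_deriv_le_of_forall_mem_sphere_norm_le (div_pos hr hw0) hdiff
      fun z hz => hM _ (hmaps (sphere_subset_closedBall hz))
  rwa [hderiv, div_div_eq_mul_div, mul_div_right_comm] at hcauchy

theorem norm_fderiv_sub_id_le_of_forall_mem_closedBall_norm_sub_le {E : Type*}
    [NormedAddCommGroup E] [NormedSpace ℂ E] {f : E → E} {p : E} {r M : ℝ} (hr : 0 < r)
    (hf : DifferentiableOn ℂ f (closedBall p r)) (hM : ∀ x ∈ closedBall p r, ‖f x - x‖ ≤ M) :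
    ‖fderiv ℂ f p - ContinuousLinearMap.id ℂ E‖ ≤ M / r := by
  have hfp : DifferentiableAt ℂ f p := hf.differentiableAt (closedBall_mem_nhds p hr)
  rw [← fderiv_id, ← fderiv_sub hfp differentiableAt_id]
  exact norm_fderiv_le_of_forall_mem_closedBall_norm_le hr (hf.sub differentiableOn_id) hM

theorem Convex.injOn_of_norm_fderiv_sub_id_le {𝕜 E : Type*} [RCLike 𝕜] [NormedAddCommGroup E]
    [NormedSpace ℝ E] [NormedSpace 𝕜 E] {f : E → E} {s : Set E} {C : ℝ} (hs : Convex ℝ s)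
    (hf : ∀ x ∈ s, DifferentiableAt 𝕜 f x)
    (bound : ∀ x ∈ s, ‖fderiv 𝕜 f x - ContinuousLinearMap.id 𝕜 E‖ ≤ C) (hC : C < 1) :
    InjOn f s := by
  intro u hu v hv huv
  have hmvt := hs.norm_image_sub_le_of_norm_fderiv_le' hf bound hu hv
  rw [huv, sub_self, ContinuousLinearMap.id_apply, zero_sub, norm_neg] at hmvt
  have : ‖v - u‖ = 0 := by nlinarith [norm_nonneg (v - u)]
  exact (sub_eq_zero.mp (norm_eq_zero.mp this)).symm

theorem stmt16_general (n : ℕ) (h υ : ℝ) (hh : 0 < h) (hυ0 : 0 < υ)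
    (O : Set (EuclideanSpace ℂ (Fin n)))
    (ω₀ : EuclideanSpace ℂ (Fin n))
    (hball : closedBall ω₀ h ⊆ O)
    (f : EuclideanSpace ℂ (Fin n) → EuclideanSpace ℂ (Fin n))
    (hf : DifferentiableOn ℂ f O)
    (hclose : ∀ u ∈ closedBall ω₀ h, ‖f u - u‖ ≤ υ * h) :
    Set.InjOn f (closedBall ω₀ ((1 - 4 * υ) * h)) := by
  have hr : 0 < 4 * υ * h := by positivity
  have hsub (p) (hp : p ∈ closedBall ω₀ ((1 - 4 * υ) * h)) :
      closedBall p (4 * υ * h) ⊆ closedBall ω₀ h :=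
    closedBall_subset_closedBall' (by rw [mem_closedBall] at hp; linarith)
  refine (convex_closedBall _ _).injOn_of_norm_fderiv_sub_id_le (𝕜 := ℂ)
    (fun p hp => ?_) (fun p hp => ?_) (show (1 / 4 : ℝ) < 1 by norm_num)
  · exact (hf.mono ((hsub p hp).trans hball)).differentiableAt (closedBall_mem_nhds p hr)
  · calc _ ≤ υ * h / (4 * υ * h) :=
          norm_fderiv_sub_id_le_of_forall_mem_closedBall_norm_sub_le hr
            (hf.mono ((hsub p hp).trans hball)) fun x hx => hclose x (hsub p hp hx)
      _ = 1 / 4 := by field_simp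

theorem stmt16 (n : ℕ) (h υ : ℝ) (hh : 0 < h) (hυ0 : 0 < υ) (hυ : υ < 1 / 6)
    (O : Set (EuclideanSpace ℂ (Fin n))) (hO : IsOpen O)
    (ω₀ : EuclideanSpace ℂ (Fin n))
    (hball : closedBall ω₀ h ⊆ O)
    (f : EuclideanSpace ℂ (Fin n) → EuclideanSpace ℂ (Fin n))
    (hf : DifferentiableOn ℂ f O)
    (hclose : ∀ u ∈ closedBall ω₀ h, ‖f u - u‖ ≤ υ * h) :
    Set.InjOn f (closedBall ω₀ ((1 - 4 * υ) * h)) :=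
  stmt16_general n h υ hh hυ0 O ω₀ hball f hf hclose
end
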